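/- Let K be a C² solution of the integral equation K(x,y) + F(x,y) + ∫₀ˣ K(x,t)·F(t,y) dt = 0 on the triangle {(x,y) : 0 ≤ y ≤ x ≤ π}; define ψ_n(x) := φ_n(x) + ∫₀ˣ K(x,t)·φ_n(t) dt, Ã := A − B·K(0,0) and 𝒜̃ := 𝒜 − ℬ·K(π,π). If f : [0,π] → ℝ^N is C¹, satisfies B·f'(0) + ÷f(0) = 0 and ℬ·f'(π) + 𝒜̃·f(π) = 0, and ∫₀^π ⟨f(x), ψ_n(x)⟩ dx = 0 for every n, then f is identically zero. In other words, the family (ψ_n) is complete among functions satisfying these boundary conditions. -/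

import Mathlib

open Matrix MeasureTheory Set

attribute [local instance] Matrix.normedAddCommGroup Matrix.normedSpace

/-! Transposing the Volterra operator `φ ↦ φ + ∫₀ˣ K(x,t) φ(t) dt` (Fubini on the triangle
`0 ≤ t ≤ x ≤ π`) shows that `f ⊥ ψₙ` for all `n` means `g ⊥ φₙ` for all `n`, where
`g(x) = f(x) + ∫ₓ^π K(t,x)ᵀ f(t) dt`. Completeness of `(φₙ)` gives `g = 0`, so `f` solves a
homogeneous Volterra equation of the second kind, and Grönwall's inequality forces `f = 0`. -/

theorem intervalIntegral_dotProduct {n : Type*} [Fintype n] {v : ℝ → n → ℝ} {a b : ℝ}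
    (hv : IntervalIntegrable v volume a b) (w : n → ℝ) :
    (∫ t in a..b, v t) ⬝ᵥ w = ∫ t in a..b, v t ⬝ᵥ w := by
  simpa using
    (((dotProductBilin ℝ ℝ).flip w).toContinuousLinearMap.intervalIntegral_comp_comm hv).symm

theorem dotProduct_intervalIntegral {n : Type*} [Fintype n] {v : ℝ → n → ℝ} {a b : ℝ}
    (hv : IntervalIntegrable v volume a b) (w : n → ℝ) :
    w ⬝ᵥ (∫ t in a..b, v t) = ∫ t in a..b, w ⬝ᵥ v t :=
  ((dotProductBilin ℝ ℝ w).toContinuousLinearMap.intervalIntegral_comp_comm hv).symm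

theorem continuous_parametric_intervalIntegral_left {E : Type*} [NormedAddCommGroup E]
    [NormedSpace ℝ E] {F : ℝ → ℝ → E} (hF : Continuous (Function.uncurry F)) (b : ℝ) :
    Continuous fun x => ∫ t in x..b, F x t := by
  simp_rw [intervalIntegral.integral_symm b]
  exact (intervalIntegral.continuous_parametric_intervalIntegral_of_continuous
    (a₀ := b) hF continuous_id).neg

theorem IsCompact.exists_norm_mulVec_le {α m n : Type*} [TopologicalSpace α] [Fintype m]
    [Fintype n] {s : Set α} (hs : IsCompact s) {A : α → Matrix m n ℝ} (hA : ContinuousOn A s) :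
    ∃ C, ∀ p ∈ s, ∀ v, ‖A p *ᵥ v‖ ≤ C * ‖v‖ := by
  -- the operator norm induces the same topology, and it bounds `‖A *ᵥ v‖` by `‖A‖ * ‖v‖`
  let := Matrix.linftyOpNormedAddCommGroup (m := m) (n := n) (α := ℝ)
  obtain ⟨C, hC⟩ := hs.exists_bound_of_continuousOn hA
  exact ⟨C, fun p hp v => (linfty_opNorm_mulVec _ _).trans
    (mul_le_mul_of_nonneg_right (hC p hp) (norm_nonneg _))⟩

theorem eq_zero_of_norm_le_mul_intervalIntegral_norm {E : Type*} [NormedAddCommGroup E]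
    {f : ℝ → E} (hf : Continuous f) {a b C : ℝ}
    (h : ∀ x ∈ Icc a b, ‖f x‖ ≤ C * ∫ t in x..b, ‖f t‖) : ∀ x ∈ Icc a b, f x = 0 := by
  -- `U s = ∫_{b-s}^b ‖f‖` runs backwards from `b`, so that `U 0 = 0` and `U' ≤ C * U`
  set U : ℝ → ℝ := fun s => ∫ t in (0:ℝ)..s, ‖f (b - t)‖
  have hU : ∀ s, HasDerivAt U ‖f (b - s)‖ s := fun s =>
    ((hf.comp (continuous_sub_left b)).norm.integral_hasStrictDerivAt 0 s).hasDerivAt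
  have hU_eq : ∀ s, U s = ∫ t in (b - s)..b, ‖f t‖ := fun s => by
    simp [U, intervalIntegral.integral_comp_sub_left (fun t => ‖f t‖)]
  have hU_zero : ∀ s ∈ Icc 0 (b - a), U s = 0 := by
    refine eq_zero_of_abs_deriv_le_mul_abs_self_of_eq_zero_right (K := C)
      (fun s _ => (hU s).continuousAt.continuousWithinAt) (fun s _ => (hU s).hasDerivWithinAt)
      intervalIntegral.integral_same fun s hs => ?_
    have hUs : 0 ≤ U s := intervalIntegral.integral_nonneg hs.1 fun _ _ => norm_nonneg _
    rw [norm_norm, Real.norm_of_nonneg hUs, hU_eq]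
    exact h (b - s) ⟨by linarith [hs.2], by linarith [hs.1]⟩
  intro x hx
  have hint : ∫ t in x..b, ‖f t‖ = 0 := by
    rw [← sub_sub_cancel b x, ← hU_eq]
    exact hU_zero _ ⟨by linarith [hx.2], by linarith [hx.1]⟩
  exact norm_le_zero_iff.mp (by simpa [hint] using h x hx)

theorem intervalIntegral_intervalIntegral_swap_triangle {E : Type*} [NormedAddCommGroup E]
    [NormedSpace ℝ E] {H : ℝ → ℝ → E} (hH : Continuous (Function.uncurry H)) {a b : ℝ}
    (hab : a ≤ b) :
    ∫ x in a..b, ∫ t in x..b, H x t = ∫ t in a..b, ∫ x in a..t, H x t := by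
  set μ := volume.restrict (Ioc a b)
  set G : ℝ → ℝ → E := fun x t =>
    {p : ℝ × ℝ | p.1 ≤ p.2}.indicator (Function.uncurry H) (x, t)
  have hG : Integrable (Function.uncurry G) (μ.prod μ) := by
    rw [Measure.prod_restrict, ← Measure.volume_eq_prod]
    exact ((hH.continuousOn.integrableOn_compact (isCompact_Icc.prod isCompact_Icc)).mono_set
      (prod_mono Ioc_subset_Icc_self Ioc_subset_Icc_self)).indicator
      (measurableSet_le measurable_fst measurable_snd)
  have hx : ∀ x ∈ Ioc a b, ∫ t, G x t ∂μ = ∫ t in x..b, H x t := fun x hx => by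
    have hinter : Ioc a b ∩ Ici x = Icc x b := by
      ext t; simp only [mem_inter_iff, mem_Ioc, mem_Ici, mem_Icc]; grind
    calc ∫ t, G x t ∂μ = ∫ t in Ioc a b, (Ici x).indicator (H x) t := rfl
      _ = ∫ t in Icc x b, H x t := by rw [setIntegral_indicator measurableSet_Ici, hinter]
      _ = ∫ t in x..b, H x t := by
        rw [integral_Icc_eq_integral_Ioc, intervalIntegral.integral_of_le hx.2]
  have ht : ∀ t ∈ Ioc a b, ∫ x, G x t ∂μ = ∫ x in a..t, H x t := fun t ht => by
    calc ∫ x, G x t ∂μ = ∫ x in Ioc a b, (Iic t).indicator (H · t) x := rfl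
      _ = ∫ x in a..t, H x t := by
        rw [setIntegral_indicator measurableSet_Iic, Ioc_inter_Iic, inf_eq_right.mpr ht.2,
          intervalIntegral.integral_of_le ht.1.le]
  rw [intervalIntegral.integral_of_le hab, intervalIntegral.integral_of_le hab,
    ← setIntegral_congr_fun measurableSet_Ioc hx, ← setIntegral_congr_fun measurableSet_Ioc ht]
  exact integral_integral_swap hG

section Volterra

variable {n : Type*} [Fintype n] {K : ℝ → ℝ → Matrix n n ℝ}

noncomputable def volterra (K : ℝ → ℝ → Matrix n n ℝ) (a : ℝ) (φ : ℝ → n → ℝ) (x : ℝ) :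
    n → ℝ :=
  φ x + ∫ t in a..x, K x t *ᵥ φ t

noncomputable def volterraAdjoint (K : ℝ → ℝ → Matrix n n ℝ) (b : ℝ) (f : ℝ → n → ℝ)
    (x : ℝ) : n → ℝ :=
  f x + ∫ t in x..b, (K t x)ᵀ *ᵥ f t

theorem continuous_transpose_mulVec_uncurry (hK : Continuous (Function.uncurry K))
    {f : ℝ → n → ℝ} (hf : Continuous f) :
    Continuous (Function.uncurry fun x t => (K t x)ᵀ *ᵥ f t) :=
  (hK.comp continuous_swap).matrix_transpose.matrix_mulVec (hf.comp continuous_snd)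

theorem continuous_volterraAdjoint (hK : Continuous (Function.uncurry K)) {f : ℝ → n → ℝ}
    (hf : Continuous f) (b : ℝ) : Continuous (volterraAdjoint K b f) :=
  hf.add <|
    continuous_parametric_intervalIntegral_left (continuous_transpose_mulVec_uncurry hK hf) b

theorem integral_volterraAdjoint_dotProduct (hK : Continuous (Function.uncurry K))
    {f φ : ℝ → n → ℝ} (hf : Continuous f) (hφ : Continuous φ) {a b : ℝ} (hab : a ≤ b) :
    ∫ x in a..b, volterraAdjoint K b f x ⬝ᵥ φ x = ∫ x in a..b, f x ⬝ᵥ volterra K a φ x := by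
  have hH : Continuous (Function.uncurry fun x t => f t ⬝ᵥ (K t x *ᵥ φ x)) :=
    (hf.comp continuous_snd).dotProduct
      ((hK.comp continuous_swap).matrix_mulVec (hφ.comp continuous_fst))
  have hadj : ∀ x, volterraAdjoint K b f x ⬝ᵥ φ x
      = f x ⬝ᵥ φ x + ∫ t in x..b, f t ⬝ᵥ (K t x *ᵥ φ x) := fun x => by
    rw [volterraAdjoint, add_dotProduct, intervalIntegral_dotProduct
      (((continuous_transpose_mulVec_uncurry hK hf).uncurry_left x).intervalIntegrable _ _)]
    simp only [mulVec_transpose, dotProduct_mulVec]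
  have hdir : ∀ t, f t ⬝ᵥ volterra K a φ t
      = f t ⬝ᵥ φ t + ∫ x in a..t, f t ⬝ᵥ (K t x *ᵥ φ x) := fun t => by
    rw [volterra, dotProduct_add, dotProduct_intervalIntegral
      (((hK.uncurry_left t).matrix_mulVec hφ).intervalIntegrable _ _)]
  have hfφ := (hf.dotProduct hφ).intervalIntegrable (μ := volume) a b
  have hinner : Continuous fun t => ∫ x in a..t, f t ⬝ᵥ (K t x *ᵥ φ x) :=
    intervalIntegral.continuous_parametric_intervalIntegral_of_continuous (μ := volume)
      (f := fun t x => f t ⬝ᵥ (K t x *ᵥ φ x)) (hH.comp continuous_swap) continuous_id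
  simp_rw [hadj, hdir]
  rw [intervalIntegral.integral_add hfφ
      ((continuous_parametric_intervalIntegral_left hH b).intervalIntegrable _ _),
    intervalIntegral.integral_add hfφ (hinner.intervalIntegrable _ _),
    intervalIntegral_intervalIntegral_swap_triangle hH hab]

theorem eq_zero_of_volterraAdjoint_eq_zero (hK : Continuous (Function.uncurry K))
    {f : ℝ → n → ℝ} (hf : Continuous f) {a b : ℝ}
    (h : ∀ x ∈ Icc a b, volterraAdjoint K b f x = 0) : ∀ x ∈ Icc a b, f x = 0 := by
  obtain ⟨C, hC⟩ := (isCompact_Icc.prod isCompact_Icc).exists_norm_mulVec_le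
    (A := fun p : ℝ × ℝ => (K p.2 p.1)ᵀ)
    (hK.comp continuous_swap).matrix_transpose.continuousOn
  refine eq_zero_of_norm_le_mul_intervalIntegral_norm (C := C) hf fun x hx => ?_
  rw [← neg_eq_of_add_eq_zero_left (h x hx), norm_neg, ← intervalIntegral.integral_const_mul]
  refine (intervalIntegral.norm_integral_le_integral_norm hx.2).trans <|
    intervalIntegral.integral_mono_on hx.2 ?_ ?_ fun t ht =>
      hC (x, t) ⟨hx, hx.1.trans ht.1, ht.2⟩ (f t)
  · exact ((continuous_transpose_mulVec_uncurry hK hf).uncurry_left x).norm.intervalIntegrable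
      _ _
  · exact (continuous_const.mul hf.norm).intervalIntegrable _ _

end Volterra

theorem transformed_family_complete
    (N : ℕ)
    -- `(φ n)` is an L²-orthogonal, complete system of eigenfunctions with eigenvalues `ev n`
    (φ : ℕ → ℝ → (Fin N → ℝ))
    (hφC : ∀ n, ContDiff ℝ 2 (φ n))
    (htotal : ∀ f : ℝ → Fin N → ℝ, ContinuousOn f (Set.Icc 0 Real.pi) →
      (∀ n, ∫ x in (0:ℝ)..Real.pi, f x ⬝ᵥ φ n x = 0) →
      ∀ x ∈ Set.Icc (0:ℝ) Real.pi, f x = 0)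
    -- `K` is a C² solution of the integral equation on the triangle
    (K : ℝ → ℝ → Matrix (Fin N) (Fin N) ℝ)
    (hKC : ContDiff ℝ 2 (Function.uncurry K))
    (ψ : ℕ → ℝ → (Fin N → ℝ))
    (hψ : ∀ n x, ψ n x = φ n x + ∫ t in (0:ℝ)..x, K x t *ᵥ φ n t)
    (f : ℝ → Fin N → ℝ) (hfC : ContDiff ℝ 1 f)
    (hforth : ∀ n, ∫ x in (0:ℝ)..Real.pi, f x ⬝ᵥ ψ n x = 0) :
    ∀ x ∈ Set.Icc (0:ℝ) Real.pi, f x = 0 := by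
  have hK := hKC.continuous
  have hf := hfC.continuous
  have hψ_eq : ∀ n, ψ n = volterra K 0 (φ n) := fun n => funext (hψ n)
  have horth : ∀ n, ∫ x in (0:ℝ)..Real.pi, volterraAdjoint K Real.pi f x ⬝ᵥ φ n x = 0 :=
    fun n => by
      rw [integral_volterraAdjoint_dotProduct hK hf (hφC n).continuous Real.pi_pos.le,
        ← hψ_eq, hforth]
  exact eq_zero_of_volterraAdjoint_eq_zero hK hf
    (htotal _ (continuous_volterraAdjoint hK hf _).continuousOn horth)
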